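/- For every even r ≥ 2, there exist infinitely many r-regular graphs of even order whose local antimagic chromatic number is 3 and whose chromatic number is 2. -/

import Mathlib

open Finset

namespace LocalAntimagic

variable {V : Type*} [Fintype V] [DecidableEq V]

/-- The induced vertex label: sum of labels of edges incident to `v`. -/
def inducedSum (G : SimpleGraph V) [DecidableRel G.Adj] (f : Sym2 V → ℕ) (v : V) : ℕ :=
  ∑ e ∈ G.incidenceFinset v, f e

/-- `f` is a local antimagic labeling of `G`: a bijection from the edge set onto
`{1, …, q}` (`q` the number of edges) such that adjacent vertices get distinct
induced sums. -/
def IsLocalAntimagic (G : SimpleGraph V) [DecidableRel G.Adj] (f : Sym2 V → ℕ) : Prop :=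
  Set.BijOn f G.edgeSet (Set.Icc 1 G.edgeFinset.card) ∧
  ∀ ⦃u v⦄, G.Adj u v → inducedSum G f u ≠ inducedSum G f v

/-- The number of distinct induced vertex labels under `f`. -/
def colorCount (G : SimpleGraph V) [DecidableRel G.Adj] (f : Sym2 V → ℕ) : ℕ :=
  (Finset.image (inducedSum G f) Finset.univ).card

/-- The local antimagic chromatic number of `G` (`⊤` if no local antimagic
labeling exists). -/
noncomputable def chiLA (G : SimpleGraph V) [DecidableRel G.Adj] : ℕ∞ :=
  sInf {n : ℕ∞ | ∃ f : Sym2 V → ℕ, IsLocalAntimagic G f ∧ (colorCount G f : ℕ∞) = n}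

/-- The circulant graph on `ℤ/nℤ` with connection set `S`. -/
def circulant (n : ℕ) [NeZero n] (S : Finset (ZMod n)) : SimpleGraph (ZMod n) where
  Adj u v := u ≠ v ∧ (u - v ∈ S ∨ v - u ∈ S)
  symm := ⟨fun u v h => ⟨h.1.symm, h.2.symm⟩⟩
  loopless := ⟨fun v h => h.1 rfl⟩

instance (n : ℕ) [NeZero n] (S : Finset (ZMod n)) : DecidableRel (circulant n S).Adj :=
  fun u v => inferInstanceAs (Decidable (u ≠ v ∧ (u - v ∈ S ∨ v - u ∈ S)))

/-- The cycle `C_n` as a circulant graph on `ℤ/nℤ`. -/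
def cycle (n : ℕ) [NeZero n] : SimpleGraph (ZMod n) := circulant n {1}

instance (n : ℕ) [NeZero n] : DecidableRel (cycle n).Adj :=
  inferInstanceAs (DecidableRel (circulant n {1}).Adj)

/-- The graph obtained from `G` by merging vertices according to the
identification map `q` (adjacent iff distinct and some preimages are adjacent). -/
def mergeGraph {V' W : Type*} (G : SimpleGraph V') (q : V' → W) : SimpleGraph W where
  Adj a b := a ≠ b ∧ ∃ u v, q u = a ∧ q v = b ∧ G.Adj u v
  symm := by
    constructor
    rintro a b ⟨hab, u, v, hu, hv, huv⟩
    exact ⟨hab.symm, v, u, hv, hu, huv.symm⟩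
  loopless := ⟨fun a h => h.1 rfl⟩

end LocalAntimagic

/-!
The witnesses are the circulants `C_n(1, 3, …, 2t + 1)` with `n` a power of two, so that every
odd jump is a unit; they are `2(t + 1)`-regular and bipartite by parity.

For a unit jump `c` the edges `{u, u + c}` form a Hamiltonian cycle `0, c, 2c, …`. The edge
leaving the vertex at position `K` on the cycle of the `j`-th jump gets the label
`n j + zigzag K`, where `zigzag` runs through `1, n, 2, n - 1, 3, …`. On each cycle a vertex at
position `K` sees two consecutive zigzag values, with sum `n/2 + 2` if `K = 0`, `n + 1` if `K` is
odd and `n + 2` otherwise; as `K ≡ u (mod 2)`, the induced labels take three values and differ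
across every edge.

Three is optimal: in a regular graph two induced values would split the vertices into two sides,
each meeting every edge once, so both sides have the same size and the same label total, which
forces the two values to coincide.
-/

namespace LocalAntimagic

open SimpleGraph

section RegularGraph

variable {V : Type*} [Fintype V] [DecidableEq V] {G : SimpleGraph V} [DecidableRel G.Adj]

theorem inducedSum_eq_sum_neighborFinset (f : Sym2 V → ℕ) (v : V) :
    inducedSum G f v = ∑ w ∈ G.neighborFinset v, f s(v, w) := by
  have hinc : G.incidenceFinset v = (G.neighborFinset v).image (fun w => s(v, w)) := by
    ext e
    induction e with
    | _ a b =>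
      simp only [mem_incidenceFinset, mk'_mem_incidenceSet_iff, mem_image, mem_neighborFinset,
        Sym2.eq_iff]
      grind [G.adj_symm]
  rw [inducedSum, hinc, sum_image fun _ _ _ _ h => Sym2.congr_right.mp h]

theorem sum_inducedSum_of_isBipartiteWith {s t : Finset V} (h : G.IsBipartiteWith s t)
    (f : Sym2 V → ℕ) : ∑ v ∈ s, inducedSum G f v = ∑ e ∈ G.edgeFinset, f e := by
  simp only [inducedSum, incidenceFinset_eq_filter, sum_filter]
  rw [sum_comm]
  refine sum_congr rfl fun e he => ?_
  induction e with
  | _ a b =>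
    have hab : G.Adj a b := by rwa [mem_edgeFinset, mem_edgeSet] at he
    have hdisj := Finset.disjoint_left.mp (Finset.disjoint_coe.mp h.disjoint)
    rcases h.mem_of_adj hab with ⟨ha, hb⟩ | ⟨ha, hb⟩
    · rw [sum_eq_single_of_mem a ha fun v hv hva => if_neg ?_, if_pos (Sym2.mem_mk_left a b)]
      rw [Sym2.mem_iff]
      rintro (rfl | rfl)
      exacts [hva rfl, hdisj hv hb]
    · rw [sum_eq_single_of_mem b hb fun v hv hvb => if_neg ?_, if_pos (Sym2.mem_mk_right a b)]
      rw [Sym2.mem_iff]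
      rintro (rfl | rfl)
      exacts [hdisj hv ha, hvb rfl]

theorem colorCount_ne_two {r : ℕ} (hr : 0 < r) (hG : G.IsRegularOfDegree r) {f : Sym2 V → ℕ}
    (hf : ∀ ⦃u v⦄, G.Adj u v → inducedSum G f u ≠ inducedSum G f v) :
    colorCount G f ≠ 2 := by
  intro h2
  obtain ⟨x, y, hxy, himg⟩ := card_eq_two.mp h2
  have hval (v : V) : inducedSum G f v = x ∨ inducedSum G f v = y := by
    simpa [himg] using mem_image_of_mem (inducedSum G f) (mem_univ v)
  set A := univ.filter fun v => inducedSum G f v = x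
  set B := univ.filter fun v => inducedSum G f v = y
  have hAB : G.IsBipartiteWith A B := by
    refine ⟨Finset.disjoint_coe.mpr (disjoint_filter.mpr fun v _ hx hy => hxy (hx ▸ hy)), ?_⟩
    intro u v huv
    have := hf huv
    simp only [coe_filter, mem_univ, true_and, Set.mem_ofPred_eq, A, B]
    rcases hval u with hu | hu <;> rcases hval v with hv | hv <;> simp_all
  have hcard : r * #A = r * #B := by
    have hdeg (s : Finset V) : ∑ v ∈ s, G.degree v = r * #s := by
      rw [sum_congr rfl fun v _ => hG v, sum_const, smul_eq_mul, mul_comm]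
    rw [← hdeg, ← hdeg, isBipartiteWith_sum_degrees_eq_card_edges hAB,
      isBipartiteWith_sum_degrees_eq_card_edges' hAB]
  have hsum : #A * x = #B * y := by
    have hA : ∑ v ∈ A, inducedSum G f v = #A * x := by
      rw [sum_congr rfl fun v hv => (mem_filter.mp hv).2, sum_const, smul_eq_mul]
    have hB : ∑ v ∈ B, inducedSum G f v = #B * y := by
      rw [sum_congr rfl fun v hv => (mem_filter.mp hv).2, sum_const, smul_eq_mul]
    rw [← hA, ← hB, sum_inducedSum_of_isBipartiteWith hAB,
      sum_inducedSum_of_isBipartiteWith hAB.symm]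
  have hApos : 0 < #A := by
    obtain ⟨v, -, hv⟩ := mem_image.mp (himg ▸ mem_insert_self x {y})
    exact card_pos.mpr ⟨v, mem_filter.mpr ⟨mem_univ v, hv⟩⟩
  rw [← Nat.eq_of_mul_eq_mul_left hr hcard] at hsum
  exact hxy (Nat.eq_of_mul_eq_mul_left hApos hsum)

theorem three_le_colorCount [Nonempty V] {r : ℕ} (hr : 0 < r) (hG : G.IsRegularOfDegree r)
    {f : Sym2 V → ℕ} (hf : ∀ ⦃u v⦄, G.Adj u v → inducedSum G f u ≠ inducedSum G f v) :
    3 ≤ colorCount G f := by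
  obtain ⟨u⟩ := ‹Nonempty V›
  obtain ⟨v, hv⟩ := card_pos.mp (by rwa [card_neighborFinset_eq_degree, hG u] :
    0 < #(G.neighborFinset u))
  have h2 : 2 ≤ colorCount G f := one_lt_card.mpr ⟨_, mem_image_of_mem _ (mem_univ u),
    _, mem_image_of_mem _ (mem_univ v), hf ((mem_neighborFinset G u v).mp hv)⟩
  have := colorCount_ne_two hr hG hf
  omega

theorem chiLA_eq_three [Nonempty V] {r : ℕ} (hr : 0 < r) (hG : G.IsRegularOfDegree r)
    {f : Sym2 V → ℕ} (hf : IsLocalAntimagic G f) (h3 : colorCount G f = 3) : chiLA G = 3 := by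
  refine le_antisymm (sInf_le ⟨f, hf, by rw [h3]; rfl⟩) (le_sInf ?_)
  rintro _ ⟨g, hg, rfl⟩
  exact_mod_cast three_le_colorCount hr hG hg.2

end RegularGraph

section CyclePosition

variable {n : ℕ} {c : ZMod n}

def cyclePos (c u : ZMod n) : ℕ := (u * c⁻¹).val

theorem cyclePos_natCast_mul (hc : IsUnit c) {k : ℕ} (hk : k < n) : cyclePos c (k * c) = k := by
  rw [cyclePos, mul_assoc, ZMod.mul_inv_of_unit _ hc, mul_one, ZMod.val_natCast_of_lt hk]

variable [NeZero n]

theorem val_add_mod_two (hn : 2 ∣ n) (a b : ZMod n) : (a + b).val % 2 = (a.val + b.val) % 2 := by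
  rw [ZMod.val_add, Nat.mod_mod_of_dvd _ hn]

theorem cyclePos_lt (u : ZMod n) : cyclePos c u < n := ZMod.val_lt _

theorem natCast_cyclePos_mul (hc : IsUnit c) (u : ZMod n) : (cyclePos c u : ZMod n) * c = u := by
  rw [cyclePos, ZMod.natCast_zmod_val, mul_assoc, ZMod.inv_mul_of_unit _ hc, mul_one]

theorem cyclePos_injective (hc : IsUnit c) : Function.Injective (cyclePos c) := fun u u' h => by
  rw [← natCast_cyclePos_mul hc u, ← natCast_cyclePos_mul hc u', h]

theorem cyclePos_eq_zero_iff (hc : IsUnit c) {u : ZMod n} : cyclePos c u = 0 ↔ u = 0 := by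
  rw [← (cyclePos_injective hc).eq_iff, ← cyclePos_natCast_mul hc (Nat.pos_of_neZero n),
    Nat.cast_zero, zero_mul]

theorem cyclePos_sub_self (hc : IsUnit c) (u : ZMod n) :
    cyclePos c (u - c) = if cyclePos c u = 0 then n - 1 else cyclePos c u - 1 := by
  have hk := cyclePos_lt (c := c) u
  conv_lhs => rw [← natCast_cyclePos_mul hc u]
  split_ifs with h0
  · rw [h0, Nat.cast_zero, zero_mul, zero_sub, ← neg_one_mul,
      ← cyclePos_natCast_mul hc (by omega : n - 1 < n), Nat.cast_pred (Nat.pos_of_neZero n),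
      ZMod.natCast_self, zero_sub]
  · rw [← cyclePos_natCast_mul hc (by omega : cyclePos c u - 1 < n), Nat.cast_pred (by omega),
      sub_one_mul]

theorem cyclePos_mod_two (hc : IsUnit c) (hn : 2 ∣ n) (hc2 : c.val % 2 = 1) (u : ZMod n) :
    cyclePos c u % 2 = u.val % 2 := by
  conv_rhs => rw [← natCast_cyclePos_mul hc u]
  rw [ZMod.val_mul, Nat.mod_mod_of_dvd _ hn, ZMod.val_natCast_of_lt (cyclePos_lt u), Nat.mul_mod,
    hc2, mul_one, Nat.mod_mod]

end CyclePosition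

def zigzag (n k : ℕ) : ℕ := if k % 2 = 0 then k / 2 + 1 else n - k / 2

theorem zigzag_bijOn (n : ℕ) : Set.BijOn (zigzag n) (Set.Iio n) (Set.Icc 1 n) := by
  refine ⟨fun k hk => ?_, fun k hk k' hk' h => ?_, fun y hy => ?_⟩
  · simp only [Set.mem_Iio, Set.mem_Icc, zigzag] at hk ⊢
    split_ifs <;> omega
  · simp only [Set.mem_Iio, zigzag] at hk hk' h
    split_ifs at h <;> omega
  · simp only [Set.mem_Icc, Set.mem_image, Set.mem_Iio, zigzag] at hy ⊢
    by_cases hy' : 2 * y ≤ n + 1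
    · exact ⟨2 * (y - 1), by omega, by split_ifs <;> omega⟩
    · exact ⟨2 * (n - y) + 1, by omega, by split_ifs <;> omega⟩

theorem zigzag_add_zigzag_pred {n k : ℕ} (hn : 2 ∣ n) (hk : k < n) :
    zigzag n k + zigzag n (if k = 0 then n - 1 else k - 1) =
      if k = 0 then n / 2 + 2 else if k % 2 = 1 then n + 1 else n + 2 := by
  unfold zigzag
  split_ifs <;> omega

theorem eq_of_mul_add_eq_mul_add {n j j' y y' : ℕ} (hy : y ∈ Set.Icc 1 n)
    (hy' : y' ∈ Set.Icc 1 n) (h : n * j + y = n * j' + y') : j = j' ∧ y = y' := by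
  obtain ⟨hy1, hy2⟩ := hy
  obtain ⟨hy1', hy2'⟩ := hy'
  rcases lt_trichotomy j j' with hlt | rfl | hgt
  · have : n * (j + 1) ≤ n * j' := Nat.mul_le_mul_left n hlt
    rw [mul_add_one] at this
    omega
  · omega
  · have : n * (j' + 1) ≤ n * j := Nat.mul_le_mul_left n hgt
    rw [mul_add_one] at this
    omega

theorem exists_eq_mul_add {n t x : ℕ} (hx : x ∈ Set.Icc 1 (n * (t + 1))) :
    ∃ j ≤ t, ∃ y ∈ Set.Icc 1 n, x = n * j + y := by
  obtain ⟨hx1, hx2⟩ := hx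
  have hn : 0 < n := Nat.pos_of_ne_zero fun h => by simp [h] at hx2; omega
  refine ⟨(x - 1) / n, ?_, (x - 1) % n + 1, ⟨by omega, Nat.mod_lt _ hn⟩, ?_⟩
  · have : x - 1 < (t + 1) * n := by rw [mul_comm]; omega
    exact Nat.lt_succ_iff.mp ((Nat.div_lt_iff_lt_mul hn).mpr this)
  · have := Nat.div_add_mod (x - 1) n
    omega

section OddCirculant

variable {n t : ℕ}

def oddJump (n j : ℕ) : ZMod n := ((2 * j + 1 : ℕ) : ZMod n)

def oddJumps (n t : ℕ) : Finset (ZMod n) := (range (t + 1)).image (oddJump n)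

abbrev oddCirculant (n t : ℕ) [NeZero n] : SimpleGraph (ZMod n) := circulant n (oddJumps n t)

theorem oddJump_val {j : ℕ} (h : 2 * j + 1 < n) : (oddJump n j).val = 2 * j + 1 :=
  ZMod.val_natCast_of_lt h

theorem oddJump_add_oddJump_ne_zero {j j' : ℕ} (h : 2 * j + 1 + (2 * j' + 1) < n) :
    oddJump n j + oddJump n j' ≠ 0 := by
  rw [oddJump, oddJump, ← Nat.cast_add, Ne, ZMod.natCast_eq_zero_iff]
  exact Nat.not_dvd_of_pos_of_lt (by omega) h

theorem eq_of_oddJump_eq (htn : 4 * t + 4 ≤ n) {j j' : ℕ} (hj : j ≤ t) (hj' : j' ≤ t)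
    (h : oddJump n j = oddJump n j') : j = j' := by
  have := congrArg ZMod.val h
  rw [oddJump_val (by omega), oddJump_val (by omega)] at this
  omega

theorem isUnit_oddJump {j : ℕ} (h : (2 * j + 1).Coprime n) : IsUnit (oddJump n j) :=
  (ZMod.isUnit_iff_coprime _ _).mpr h

theorem mem_oddJumps {x : ZMod n} : x ∈ oddJumps n t ↔ ∃ j ≤ t, oddJump n j = x := by
  simp only [oddJumps, mem_image, mem_range, Nat.lt_succ_iff]

variable [NeZero n]

theorem oddCirculant_adj (htn : 4 * t + 4 ≤ n) {u v : ZMod n} :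
    (oddCirculant n t).Adj u v ↔ ∃ j ≤ t, v = u + oddJump n j ∨ u = v + oddJump n j := by
  simp only [circulant, mem_oddJumps]
  constructor
  · rintro ⟨-, ⟨j, hj, h⟩ | ⟨j, hj, h⟩⟩
    exacts [⟨j, hj, Or.inr (by rw [h]; ring)⟩, ⟨j, hj, Or.inl (by rw [h]; ring)⟩]
  · have hne {j : ℕ} (hj : j ≤ t) (w : ZMod n) : w ≠ w + oddJump n j := by
      rw [ne_eq, left_eq_add, ← ZMod.val_eq_zero, oddJump_val (by omega)]
      omega
    rintro ⟨j, hj, rfl | rfl⟩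
    exacts [⟨hne hj u, Or.inr ⟨j, hj, by ring⟩⟩, ⟨(hne hj v).symm, Or.inl ⟨j, hj, by ring⟩⟩]

theorem sum_neighborFinset_oddCirculant (htn : 4 * t + 4 ≤ n) (u : ZMod n) (g : ZMod n → ℕ) :
    ∑ v ∈ (oddCirculant n t).neighborFinset u, g v =
      ∑ j ∈ range (t + 1), (g (u + oddJump n j) + g (u - oddJump n j)) := by
  have hj {j : ℕ} (h : j ∈ range (t + 1)) : j ≤ t := Nat.lt_succ_iff.mp (mem_range.mp h)
  have hnbr : (oddCirculant n t).neighborFinset u =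
      (range (t + 1)).image (u + oddJump n ·) ∪ (range (t + 1)).image (u - oddJump n ·) := by
    ext v
    simp only [mem_neighborFinset, oddCirculant_adj htn, mem_union, mem_image, mem_range,
      Nat.lt_succ_iff]
    grind
  have hdisj : Disjoint ((range (t + 1)).image (u + oddJump n ·))
      ((range (t + 1)).image (u - oddJump n ·)) := by
    simp only [Finset.disjoint_left, mem_image]
    rintro _ ⟨j, hjt, rfl⟩ ⟨j', hjt', h⟩
    have := hj hjt
    have := hj hjt'
    exact oddJump_add_oddJump_ne_zero (n := n) (j := j) (j' := j') (by omega)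
      (by linear_combination -h)
  rw [hnbr, sum_union hdisj, sum_image, sum_image, sum_add_distrib]
  · exact fun j hj₁ j' hj₂ h => eq_of_oddJump_eq htn (hj hj₁) (hj hj₂) (by linear_combination -h)
  · exact fun j hj₁ j' hj₂ h => eq_of_oddJump_eq htn (hj hj₁) (hj hj₂) (by linear_combination h)

theorem oddCirculant_isRegularOfDegree (htn : 4 * t + 4 ≤ n) :
    (oddCirculant n t).IsRegularOfDegree (2 * (t + 1)) := fun u => by
  rw [← card_neighborFinset_eq_degree, card_eq_sum_ones, sum_neighborFinset_oddCirculant htn,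
    sum_const, card_range, smul_eq_mul, mul_comm]

theorem val_mod_two_ne_of_adj (hn : 2 ∣ n) (htn : 4 * t + 4 ≤ n) {u v : ZMod n}
    (h : (oddCirculant n t).Adj u v) : u.val % 2 ≠ v.val % 2 := by
  obtain ⟨j, hj, rfl | rfl⟩ := (oddCirculant_adj htn).mp h
  all_goals rw [val_add_mod_two hn, oddJump_val (by omega)]; omega

theorem oddCirculant_chromaticNumber (hn : 2 ∣ n) (htn : 4 * t + 4 ≤ n) :
    (oddCirculant n t).chromaticNumber = 2 := by
  have hcol : (oddCirculant n t).Colorable 2 :=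
    ⟨Coloring.mk (fun v => ⟨v.val % 2, Nat.mod_lt _ two_pos⟩)
      fun h he => val_mod_two_ne_of_adj hn htn h (congrArg Fin.val he)⟩
  have hadj : (oddCirculant n t).Adj 0 (oddJump n 0) :=
    (oddCirculant_adj htn).mpr ⟨0, Nat.zero_le t, Or.inl (zero_add _).symm⟩
  exact le_antisymm hcol.chromaticNumber_le (two_le_chromaticNumber_of_adj hadj)

end OddCirculant

section Labeling

variable {n t : ℕ}

/-- The edge `{u, u + oddJump n j}` is read as the arc leaving `u`; the opposite difference
`-oddJump n j` is not a jump, so exactly one of the two arc labels of an edge is nonzero. -/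
def arcLabel (n t : ℕ) (u v : ZMod n) : ℕ :=
  if v - u ∈ oddJumps n t then n * ((v - u).val / 2) + zigzag n (cyclePos (v - u) u) else 0

def edgeLabel (n t : ℕ) : Sym2 (ZMod n) → ℕ :=
  Sym2.lift ⟨fun u v => arcLabel n t u v + arcLabel n t v u, fun _ _ => add_comm _ _⟩

theorem edgeLabel_mk_add_oddJump (htn : 4 * t + 4 ≤ n) {j : ℕ} (hj : j ≤ t) (u : ZMod n) :
    edgeLabel n t s(u, u + oddJump n j) = n * j + zigzag n (cyclePos (oddJump n j) u) := by
  have hbwd : u - (u + oddJump n j) ∉ oddJumps n t := by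
    rw [sub_add_cancel_left, mem_oddJumps]
    rintro ⟨j', hj', h⟩
    exact oddJump_add_oddJump_ne_zero (n := n) (j := j') (j' := j) (by omega)
      (by rw [h]; ring)
  have hhalf : (2 * j + 1) / 2 = j := by omega
  simp only [edgeLabel, Sym2.lift_mk, arcLabel, add_sub_cancel_left, if_neg hbwd,
    if_pos (mem_oddJumps.mpr ⟨j, hj, rfl⟩), oddJump_val (show 2 * j + 1 < n by omega), hhalf,
    add_zero]

variable [NeZero n]

theorem exists_eq_mk_add_oddJump (htn : 4 * t + 4 ≤ n) {e : Sym2 (ZMod n)}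
    (he : e ∈ (oddCirculant n t).edgeSet) : ∃ j ≤ t, ∃ u, e = s(u, u + oddJump n j) := by
  induction e with
  | _ a b =>
    rw [mem_edgeSet] at he
    obtain ⟨j, hj, rfl | rfl⟩ := (oddCirculant_adj htn).mp he
    exacts [⟨j, hj, a, rfl⟩, ⟨j, hj, b, Sym2.eq_swap⟩]

theorem card_edgeFinset_oddCirculant (htn : 4 * t + 4 ≤ n) :
    #(oddCirculant n t).edgeFinset = n * (t + 1) := by
  have := (oddCirculant n t).sum_degrees_eq_twice_card_edges
  rw [sum_congr rfl fun v _ => oddCirculant_isRegularOfDegree htn v, sum_const, card_univ,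
    ZMod.card, smul_eq_mul] at this
  linarith

theorem edgeLabel_bijOn (hn : 2 ∣ n) (htn : 4 * t + 4 ≤ n)
    (hcop : ∀ j ≤ t, (2 * j + 1).Coprime n) :
    Set.BijOn (edgeLabel n t) (oddCirculant n t).edgeSet
      (Set.Icc 1 #(oddCirculant n t).edgeFinset) := by
  have hz := zigzag_bijOn n
  rw [card_edgeFinset_oddCirculant htn]
  refine ⟨fun e he => ?_, fun e he e' he' h => ?_, fun x hx => ?_⟩
  · obtain ⟨j, hj, u, rfl⟩ := exists_eq_mk_add_oddJump htn he
    obtain ⟨hy1, hy2⟩ := hz.mapsTo (cyclePos_lt (c := oddJump n j) u)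
    rw [edgeLabel_mk_add_oddJump htn hj]
    have : n * j + n ≤ n * (t + 1) := by
      rw [← mul_add_one]
      exact Nat.mul_le_mul_left n (by omega)
    exact ⟨by omega, by omega⟩
  · obtain ⟨j, hj, u, rfl⟩ := exists_eq_mk_add_oddJump htn he
    obtain ⟨j', hj', u', rfl⟩ := exists_eq_mk_add_oddJump htn he'
    rw [edgeLabel_mk_add_oddJump htn hj, edgeLabel_mk_add_oddJump htn hj'] at h
    obtain ⟨rfl, hzz⟩ := eq_of_mul_add_eq_mul_add (hz.mapsTo (cyclePos_lt u))
      (hz.mapsTo (cyclePos_lt u')) h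
    rw [cyclePos_injective (isUnit_oddJump (hcop j hj))
      (hz.injOn (cyclePos_lt u) (cyclePos_lt u') hzz)]
  · obtain ⟨j, hj, y, hy, rfl⟩ := exists_eq_mul_add hx
    obtain ⟨k, hk, rfl⟩ := hz.surjOn hy
    refine ⟨s(k * oddJump n j, k * oddJump n j + oddJump n j),
      (oddCirculant_adj htn).mpr ⟨j, hj, Or.inl rfl⟩, ?_⟩
    rw [edgeLabel_mk_add_oddJump htn hj, cyclePos_natCast_mul (isUnit_oddJump (hcop j hj)) hk]

def vertexWeight (n : ℕ) [NeZero n] (v : ZMod n) : ℕ :=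
  if v = 0 then n / 2 + 2 else if v.val % 2 = 1 then n + 1 else n + 2

theorem inducedSum_edgeLabel (hn : 2 ∣ n) (htn : 4 * t + 4 ≤ n)
    (hcop : ∀ j ≤ t, (2 * j + 1).Coprime n) (v : ZMod n) :
    inducedSum (oddCirculant n t) (edgeLabel n t) v =
      n * (t * (t + 1)) + (t + 1) * vertexWeight n v := by
  have hpair : ∀ j ∈ range (t + 1),
      edgeLabel n t s(v, v + oddJump n j) + edgeLabel n t s(v, v - oddJump n j) =
        2 * n * j + vertexWeight n v := by
    intro j hj
    replace hj : j ≤ t := Nat.lt_succ_iff.mp (mem_range.mp hj)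
    have hc := isUnit_oddJump (hcop j hj)
    have hodd : (oddJump n j).val % 2 = 1 := by rw [oddJump_val (by omega)]; omega
    have hzz := zigzag_add_zigzag_pred hn (cyclePos_lt (c := oddJump n j) v)
    simp only [cyclePos_eq_zero_iff hc, cyclePos_mod_two hc hn hodd] at hzz
    have hswap : s(v, v - oddJump n j) =
        s(v - oddJump n j, v - oddJump n j + oddJump n j) := by
      rw [sub_add_cancel, Sym2.eq_swap]
    rw [hswap, edgeLabel_mk_add_oddJump htn hj, edgeLabel_mk_add_oddJump htn hj,
      cyclePos_sub_self hc]
    simp only [cyclePos_eq_zero_iff hc]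
    rw [vertexWeight, ← hzz]
    ring
  have hgauss : (∑ j ∈ range (t + 1), j) * 2 = (t + 1) * t := by
    rw [sum_range_id_mul_two, Nat.add_sub_cancel]
  rw [inducedSum_eq_sum_neighborFinset, sum_neighborFinset_oddCirculant htn,
    sum_congr rfl hpair, sum_add_distrib, ← mul_sum, sum_const, card_range, smul_eq_mul]
  nlinarith [hgauss]

theorem vertexWeight_ne_of_adj (hn : 2 ∣ n) (htn : 4 * t + 4 ≤ n) {u v : ZMod n}
    (h : (oddCirculant n t).Adj u v) : vertexWeight n u ≠ vertexWeight n v := by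
  have hpar := val_mod_two_ne_of_adj hn htn h
  have hne := h.ne
  unfold vertexWeight
  split_ifs <;> simp_all <;> omega

theorem image_vertexWeight (htn : 4 * t + 4 ≤ n) :
    univ.image (vertexWeight n) = {n / 2 + 2, n + 1, n + 2} := by
  have hW {k : ℕ} (h0 : 0 < k) (hk : k < n) :
      vertexWeight n k = if k % 2 = 1 then n + 1 else n + 2 := by
    have hk0 : ((k : ℕ) : ZMod n) ≠ 0 :=
      (ZMod.val_ne_zero _).mp (by rw [ZMod.val_natCast_of_lt hk]; omega)
    rw [vertexWeight, if_neg hk0, ZMod.val_natCast_of_lt hk]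
  apply Subset.antisymm
  · intro w hw
    obtain ⟨v, -, rfl⟩ := mem_image.mp hw
    unfold vertexWeight
    split_ifs <;> simp
  · intro w hw
    simp only [mem_insert, mem_singleton] at hw
    rcases hw with rfl | rfl | rfl
    · exact mem_image.mpr ⟨0, mem_univ _, if_pos rfl⟩
    · exact mem_image.mpr ⟨(1 : ℕ), mem_univ _, hW one_pos (by omega)⟩
    · exact mem_image.mpr ⟨(2 : ℕ), mem_univ _, hW two_pos (by omega)⟩

theorem colorCount_edgeLabel (hn : 2 ∣ n) (htn : 4 * t + 4 ≤ n)
    (hcop : ∀ j ≤ t, (2 * j + 1).Coprime n) :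
    colorCount (oddCirculant n t) (edgeLabel n t) = 3 := by
  let φ : ℕ → ℕ := fun w => n * (t * (t + 1)) + (t + 1) * w
  have hφ : Function.Injective φ :=
    fun _ _ h => Nat.eq_of_mul_eq_mul_left t.succ_pos (Nat.add_left_cancel h)
  have himg : univ.image (inducedSum (oddCirculant n t) (edgeLabel n t)) =
      (univ.image (vertexWeight n)).image φ := by
    rw [image_image]
    exact image_congr fun v _ => inducedSum_edgeLabel hn htn hcop v
  rw [colorCount, himg, card_image_of_injective _ hφ, image_vertexWeight htn]
  rw [card_insert_of_notMem, card_insert_of_notMem, card_singleton] <;> simp; omega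

theorem edgeLabel_isLocalAntimagic (hn : 2 ∣ n) (htn : 4 * t + 4 ≤ n)
    (hcop : ∀ j ≤ t, (2 * j + 1).Coprime n) :
    IsLocalAntimagic (oddCirculant n t) (edgeLabel n t) := by
  refine ⟨edgeLabel_bijOn hn htn hcop, fun u v h hsum => vertexWeight_ne_of_adj hn htn h ?_⟩
  rw [inducedSum_edgeLabel hn htn hcop, inducedSum_edgeLabel hn htn hcop] at hsum
  exact Nat.eq_of_mul_eq_mul_left t.succ_pos (Nat.add_left_cancel hsum)

theorem chiLA_oddCirculant (hn : 2 ∣ n) (htn : 4 * t + 4 ≤ n)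
    (hcop : ∀ j ≤ t, (2 * j + 1).Coprime n) : chiLA (oddCirculant n t) = 3 :=
  chiLA_eq_three (by omega) (oddCirculant_isRegularOfDegree htn)
    (edgeLabel_isLocalAntimagic hn htn hcop) (colorCount_edgeLabel hn htn hcop)

end Labeling

end LocalAntimagic

open LocalAntimagic in
/-- for every even `r ≥ 2` there are infinitely many `r`-regular
graphs of even order with `χ_la = 3` and chromatic number 2. -/
theorem stmt13 (r : ℕ) (hr : 2 ≤ r) (heven : Even r) :
    ∀ N : ℕ, ∃ (n : ℕ) (G : SimpleGraph (Fin n)) (inst : DecidableRel G.Adj),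
      N < n ∧ Even n ∧ G.IsRegularOfDegree r ∧
      @chiLA (Fin n) _ _ G inst = 3 ∧ G.chromaticNumber = 2 := by
  intro N
  obtain ⟨t, rfl⟩ : ∃ t, r = 2 * (t + 1) := ⟨r / 2 - 1, by obtain ⟨c, rfl⟩ := heven; omega⟩
  obtain ⟨k, hk⟩ : ∃ k, 2 ^ (N + 4 * t + 4) = k + 1 :=
    ⟨_, (Nat.sub_add_cancel Nat.one_le_two_pow).symm⟩
  have hlarge : N + 4 * t + 4 < k + 1 := hk ▸ Nat.lt_two_pow_self
  have hn : 2 ∣ k + 1 := hk ▸ dvd_pow_self 2 (by omega)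
  have hcop : ∀ j ≤ t, (2 * j + 1).Coprime (k + 1) := fun j _ =>
    hk ▸ Nat.Coprime.pow_right _ (Nat.coprime_two_right.mpr (odd_two_mul_add_one j))
  have htn : 4 * t + 4 ≤ k + 1 := by omega
  exact ⟨k + 1, oddCirculant (k + 1) t, inferInstanceAs (DecidableRel (circulant _ _).Adj),
    by omega, even_iff_two_dvd.mpr hn, oddCirculant_isRegularOfDegree htn,
    chiLA_oddCirculant hn htn hcop, oddCirculant_chromaticNumber hn htn⟩
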